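/- arXiv:1812.07239 — 2 statements merged into one kernel-verified Lean document; each statement's English description precedes it below -/
import Mathlib

section
/- Let ω = s/q with s, q coprime polynomials, q having all roots on the unit circle, deg(q) = m, and suppose ω(T) ⊂ ℝ (ω maps the unit circle into the reals where defined). Let γ be the unimodular constant with q = γ q^♯, and set l_± = m − deg(s ± i q). Then s + i q = γ z^{l_−} (s − i q)^♯ and s − i q = γ z^{l_+} (s + i q)^♯. -/
open Polynomial

/-!
On the unit circle, away from the roots of `q`, write `s(z) = t q(z)` with `t` real. For any
`u ∈ ℂ` this gives `(s + u q)(z) = (t + u) q(z)` and, since `z̄ = z⁻¹`,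
`(s + ū q)^♯(z) = z^{deg(s + ū q)} (t + u) conj(q(z))`, while `q = γ q^♯` turns `conj(q(z))` back
into `q(z)`. Hence `X^{deg(s + ū q)} (s + u q) = γ X^m (s + ū q)^♯` at infinitely many points, so
as polynomials. The same identity with `u` and `ū` exchanged bounds `deg(s + ū q)` by `m`, which
lets the power of `X` be cancelled; `u = ±i` gives the two claims.
-/

/-- The conjugate-reversed polynomial. -/
noncomputable def sharp (r : Polynomial ℂ) : Polynomial ℂ :=
  (r.map (starRingEnd ℂ)).reverse

open ComplexConjugate

namespace Polynomial

theorem natDegree_le_of_X_pow_mul_eq {R : Type*} [Semiring R] {f h : R[X]} {a m : ℕ}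
    (hh : h.natDegree ≤ a) (heq : X ^ a * f = X ^ m * h) : f.natDegree ≤ m := by
  nontriviality R
  rcases eq_or_ne f 0 with rfl | hf
  · simp
  have hle : (X ^ a * f).natDegree ≤ m + a := by
    rw [heq]
    exact natDegree_mul_le.trans (add_le_add (natDegree_X_pow_le m) hh)
  rw [natDegree_X_pow_mul a hf] at hle
  omega

theorem eq_X_pow_sub_mul_of_X_pow_mul_eq {R : Type*} [Semiring R] {f h : R[X]} {a m : ℕ}
    (ha : a ≤ m) (heq : X ^ a * f = X ^ m * h) : f = X ^ (m - a) * h :=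
  (isRegular_X_pow a).left <| show X ^ a * f = X ^ a * (X ^ (m - a) * h) by
    rw [heq, ← mul_assoc, ← pow_add, add_tsub_cancel_of_le ha]

theorem infinite_setOf_norm_eq_one_and_eval_ne_zero {p : ℂ[X]} (hp : p ≠ 0) :
    {z : ℂ | ‖z‖ = 1 ∧ p.eval z ≠ 0}.Infinite := by
  have hcircle : (Metric.sphere (0 : ℂ) 1).Infinite :=
    (isPreconnected_sphere (by simp [Complex.rank_real_complex]) 0 1).infinite_of_nontrivial
      ⟨1, by simp, -1, by simp, by norm_num⟩
  convert hcircle.sdiff (finite_setOfPred_isRoot hp) using 1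
  ext z
  simp

end Polynomial

theorem natDegree_sharp_le (r : ℂ[X]) : (sharp r).natDegree ≤ r.natDegree :=
  (reverse_natDegree_le _).trans (natDegree_map _).le

theorem eval_sharp_of_norm_eq_one (r : ℂ[X]) {z : ℂ} (hz : ‖z‖ = 1) :
    (sharp r).eval z = z ^ r.natDegree * conj (r.eval z) := by
  have hz0 : z ≠ 0 := by rintro rfl; simp at hz
  let := invertibleOfNonzero (inv_ne_zero hz0)
  have h := eval₂_reverse_mul_pow (RingHom.id ℂ) z⁻¹ (r.map conj)
  rw [invOf_eq_inv, inv_inv, natDegree_map, ← eval, ← eval, eval_map, Complex.inv_eq_conj hz,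
    eval₂_at_apply, ← Complex.inv_eq_conj hz] at h
  rw [sharp, ← h, mul_left_comm, ← mul_pow, mul_inv_cancel₀ hz0, one_pow, mul_one]

section RealOnCircle

variable {s q : ℂ[X]} {γ : ℂ}

theorem X_pow_mul_add_C_mul_eq (u : ℂ) (hq : q ≠ 0)
    (hreal : ∀ z : ℂ, ‖z‖ = 1 → q.eval z ≠ 0 → ∃ t : ℝ, s.eval z / q.eval z = (t : ℂ))
    (hqsi : q = C γ * sharp q) :
    X ^ (s + C (conj u) * q).natDegree * (s + C u * q) =
      X ^ q.natDegree * (C γ * sharp (s + C (conj u) * q)) := by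
  refine eq_of_infinite_eval_eq _ _ <|
    (infinite_setOf_norm_eq_one_and_eval_ne_zero hq).mono fun z hz ↦ ?_
  obtain ⟨hz, hqz⟩ := hz
  obtain ⟨t, ht⟩ := hreal z hz hqz
  rw [div_eq_iff hqz] at ht
  have hqγ : q.eval z = γ * z ^ q.natDegree * conj (q.eval z) := by
    conv_lhs => rw [hqsi]
    rw [eval_mul, eval_C, eval_sharp_of_norm_eq_one q hz, mul_assoc]
  simp only [Set.mem_ofPred_eq, eval_mul, eval_pow, eval_X, eval_C, eval_add,
    eval_sharp_of_norm_eq_one _ hz, map_add, map_mul, Complex.conj_conj, ht,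
    Complex.conj_ofReal]
  linear_combination (z ^ (s + C (conj u) * q).natDegree * ((t : ℂ) + u)) * hqγ

theorem add_C_mul_eq_C_mul_X_pow_mul_sharp (u : ℂ) (hq : q ≠ 0)
    (hreal : ∀ z : ℂ, ‖z‖ = 1 → q.eval z ≠ 0 → ∃ t : ℝ, s.eval z / q.eval z = (t : ℂ))
    (hqsi : q = C γ * sharp q) :
    s + C u * q =
      C γ * X ^ (q.natDegree - (s + C (conj u) * q).natDegree) * sharp (s + C (conj u) * q) := by
  have hu := X_pow_mul_add_C_mul_eq u hq hreal hqsi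
  have hconj := X_pow_mul_add_C_mul_eq (conj u) hq hreal hqsi
  rw [Complex.conj_conj] at hconj
  have hdeg := natDegree_le_of_X_pow_mul_eq
    ((natDegree_C_mul_le _ _).trans (natDegree_sharp_le _)) hconj
  rw [eq_X_pow_sub_mul_of_X_pow_mul_eq hdeg hu, mul_left_comm, mul_assoc]

end RealOnCircle

theorem ids_s_pm_iq_general (s q : Polynomial ℂ) (γ : ℂ)
    (hq : q ≠ 0)
    (hreal : ∀ z : ℂ, ‖z‖ = 1 → q.eval z ≠ 0 →
      ∃ t : ℝ, s.eval z / q.eval z = (t : ℂ))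
    (hqsi : q = Polynomial.C γ * sharp q) :
    s + Polynomial.C Complex.I * q =
      Polynomial.C γ *
        Polynomial.X ^ (q.natDegree - (s - Polynomial.C Complex.I * q).natDegree) *
        sharp (s - Polynomial.C Complex.I * q) ∧
    s - Polynomial.C Complex.I * q =
      Polynomial.C γ *
        Polynomial.X ^ (q.natDegree - (s + Polynomial.C Complex.I * q).natDegree) *
        sharp (s + Polynomial.C Complex.I * q) := by
  have hsub : s - C Complex.I * q = s + C (-Complex.I) * q := by
    rw [C_neg, neg_mul, sub_eq_add_neg]
  have hplus := add_C_mul_eq_C_mul_X_pow_mul_sharp Complex.I hq hreal hqsi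
  have hminus := add_C_mul_eq_C_mul_X_pow_mul_sharp (-Complex.I) hq hreal hqsi
  rw [Complex.conj_I, ← hsub] at hplus
  rw [map_neg (starRingEnd ℂ), Complex.conj_I, neg_neg, ← hsub] at hminus
  exact ⟨hplus, hminus⟩

/-- If `ω = s/q`, `q` with all roots on the unit circle, `ω(𝕋) ⊆ ℝ`, and `γ` is the
unimodular constant with `q = γ q^♯`, then with `l_± = m − deg(s ± iq)` one has
`s + iq = γ z^(l_−) (s − iq)^♯` and `s − iq = γ z^(l_+) (s + iq)^♯`. -/
theorem ids_s_pm_iq (s q : Polynomial ℂ) (γ : ℂ)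
    (hcop : IsCoprime s q) (hq : q ≠ 0)
    (hqroots : ∀ z : ℂ, q.IsRoot z → ‖z‖ = 1)
    (hreal : ∀ z : ℂ, ‖z‖ = 1 → q.eval z ≠ 0 →
      ∃ t : ℝ, s.eval z / q.eval z = (t : ℂ))
    (hγabs : ‖γ‖ = 1)
    (hqsi : q = Polynomial.C γ * sharp q) :
    s + Polynomial.C Complex.I * q =
      Polynomial.C γ *
        Polynomial.X ^ (q.natDegree - (s - Polynomial.C Complex.I * q).natDegree) *
        sharp (s - Polynomial.C Complex.I * q) ∧
    s - Polynomial.C Complex.I * q =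
      Polynomial.C γ *
        Polynomial.X ^ (q.natDegree - (s + Polynomial.C Complex.I * q).natDegree) *
        sharp (s + Polynomial.C Complex.I * q) :=
  ids_s_pm_iq_general s q γ hq hreal hqsi
end

section
/- Let ω = s/q with s, q coprime polynomials, all roots of q on the unit circle, and ω(T) ⊂ ℝ. Let k_{±,1} denote the number of roots of s ± i q strictly inside the unit circle (with multiplicity), k_{±,2} the number strictly outside, and l_± = deg(q) − deg(s ± i q). Then k_{+,1} = l_− + k_{−,2} and k_{−,1} = l_+ + k_{+,2}. Consequently, k_{+,1} = k_{−,1} if and only if k_{+,1} = l_+ + k_{+,2}, and if k_{+,1} = k_{−,1} then deg(q) is even. -/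
/-!
Fix `N` at least the degrees of all polynomials involved and let
`p^♯ = X ^ N * conj (p (1 / conj X))`. On the unit circle `1 / conj z = z`, so the reality of
`s / q`, i.e. `s * conj q = conj s * q` there, becomes the polynomial identity
`(s + i q) * q^♯ = q * (s - i q)^♯`. Inversion in the circle exchanges its inside and outside,
so `p^♯` has `N - deg p` roots at `0` and one root inside for each root of `p` outside. Since `q`
has all its roots on the circle, counting the roots inside on both sides gives
`k_{+,1} = l_- + k_{-,2}`; comparing degrees gives `deg (s ± i q) ≤ deg q`, and
`k_{±,1} + k_{±,2} = deg (s ± i q)` turns the two identities into the remaining claims.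
-/

open Polynomial ComplexConjugate

theorem Complex.mul_conj_eq_conj_mul_of_div_eq_ofReal {a b : ℂ}
    (h : b ≠ 0 → ∃ t : ℝ, a / b = t) : a * conj b = conj a * b := by
  by_cases hb : b = 0
  · simp [hb]
  · obtain ⟨t, ht⟩ := h hb
    rw [(div_eq_iff hb).mp ht, map_mul, Complex.conj_ofReal]
    ring

namespace Polynomial

theorem reflect_multiset_prod_X_sub_C {R : Type*} [CommRing R] [Nontrivial R] (m : Multiset R) :
    reflect (Multiset.card m) (m.map fun r => X - C r).prod =
      (m.map fun r => 1 - C r * X).prod := by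
  induction m using Multiset.induction_on with
  | empty => simp
  | cons a m ih =>
    rw [Multiset.card_cons, add_comm, Multiset.map_cons, Multiset.prod_cons,
      reflect_mul _ _ (natDegree_X_sub_C_le a) (natDegree_multiset_prod_X_sub_C_eq_card m).le, ih,
      Multiset.map_cons, Multiset.prod_cons, reflect_sub, reflect_C, reflect_one_X, pow_one]

theorem roots_multiset_prod_one_sub_C_mul_X {K : Type*} [Field K] [DecidableEq K] (m : Multiset K) :
    (m.map fun r => 1 - C r * X).prod.roots = (m.filter (· ≠ 0)).map (·⁻¹) := by
  induction m using Multiset.induction_on with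
  | empty => simp
  | cons a m ih =>
    have hprod : (m.map fun r => 1 - C r * X).prod ≠ 0 := by
      intro h
      simpa [eval_multiset_prod] using congrArg (eval 0) h
    by_cases ha : a = 0
    · simp [ha, ih]
    · have hfactor : (1 - C a * X : K[X]) = C (-a) * (X - C a⁻¹) := by
        rw [mul_sub, ← C_mul, neg_mul, mul_inv_cancel₀ ha]
        simp only [map_neg, map_one]
        ring
      rw [Multiset.map_cons, Multiset.prod_cons, hfactor,
        roots_mul (mul_ne_zero (mul_ne_zero (by simpa using ha) (X_sub_C_ne_zero _)) hprod),
        roots_C_mul _ (neg_ne_zero.mpr ha), roots_X_sub_C, ih]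
      simp [ha]

theorem reflect_eq_X_pow_mul_reverse {R : Type*} [CommSemiring R] {p : R[X]} {N : ℕ}
    (hN : p.natDegree ≤ N) : reflect N p = X ^ (N - p.natDegree) * reverse p := by
  have := reflect_mul (1 : R[X]) p (F := N - p.natDegree) (by simp) le_rfl
  rwa [one_mul, Nat.sub_add_cancel hN, reflect_one] at this

theorem roots_reflect {K : Type*} [Field K] [DecidableEq K] {p : K[X]} (hp : p ≠ 0)
    (hroots : Multiset.card p.roots = p.natDegree) {N : ℕ} (hN : p.natDegree ≤ N) :
    (reflect N p).roots =
      Multiset.replicate (N - p.natDegree) 0 + (p.roots.filter (· ≠ 0)).map (·⁻¹) := by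
  have hreverse : reverse p = C p.leadingCoeff * (p.roots.map fun r => 1 - C r * X).prod := by
    rw [reverse]
    nth_rewrite 2 [← C_leadingCoeff_mul_prod_multiset_X_sub_C hroots]
    rw [reflect_C_mul, ← hroots, reflect_multiset_prod_X_sub_C]
  rw [reflect_eq_X_pow_mul_reverse hN, roots_mul, roots_X_pow, Multiset.nsmul_singleton, hreverse,
    roots_C_mul _ (leadingCoeff_ne_zero.mpr hp), roots_multiset_prod_one_sub_C_mul_X]
  exact mul_ne_zero (pow_ne_zero _ X_ne_zero) (by rwa [Ne, reverse_eq_zero])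

theorem eq_of_forall_norm_eq_one_eval_eq {p r : ℂ[X]}
    (h : ∀ z : ℂ, ‖z‖ = 1 → p.eval z = r.eval z) : p = r := by
  have hsphere : (Metric.sphere (0 : ℂ) 1).Infinite :=
    (isPreconnected_sphere (by simp [Complex.rank_real_complex]) 0 1).infinite_of_nontrivial
      ⟨1, by simp, -1, by simp, by norm_num⟩
  exact eq_of_infinite_eval_eq p r (hsphere.mono fun z hz => h z (by simpa using hz))

/-- `z ↦ z ^ N * conj (p (1 / conj z))`; for `N = deg p` this is the paper's `p^♯`. -/
noncomputable def conjReflect (N : ℕ) (p : ℂ[X]) : ℂ[X] :=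
  reflect N (p.map (starRingEnd ℂ))

theorem conjReflect_ne_zero {p : ℂ[X]} (hp : p ≠ 0) (N : ℕ) : conjReflect N p ≠ 0 := by
  rwa [conjReflect, Ne, reflect_eq_zero_iff, Polynomial.map_eq_zero]

theorem eval_conjReflect_mul_conj_pow {p : ℂ[X]} {N : ℕ} (hN : p.natDegree ≤ N) {z : ℂ}
    (hz : ‖z‖ = 1) : (conjReflect N p).eval z * conj z ^ N = conj (p.eval z) := by
  have hz' : conj z * z = 1 := by rw [Complex.conj_mul', hz]; simp
  let : Invertible (conj z) := ⟨z, by rwa [mul_comm], hz'⟩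
  calc (conjReflect N p).eval z * conj z ^ N = (p.map (starRingEnd ℂ)).eval (conj z) :=
        eval₂_reflect_mul_pow (RingHom.id ℂ) (conj z) N _ (by rwa [natDegree_map])
    _ = conj (p.eval z) := by rw [eval_map, eval₂_hom]

theorem natDegree_conjReflect_le {p : ℂ[X]} {N : ℕ} (hN : p.natDegree ≤ N) :
    (conjReflect N p).natDegree ≤ N :=
  natDegree_reflect_le.trans (max_le le_rfl (by rwa [natDegree_map]))

theorem natDegree_conjReflect {p : ℂ[X]} {N : ℕ} (hN : p.natDegree ≤ N)
    (hp : p.eval 0 ≠ 0) :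
    (conjReflect N p).natDegree = N := by
  refine (natDegree_conjReflect_le hN).antisymm (le_natDegree_of_ne_zero ?_)
  rw [conjReflect, coeff_reflect, revAt_le le_rfl, Nat.sub_self, coeff_map, coeff_zero_eq_eval_zero]
  simpa using hp

theorem card_roots_conjReflect_norm_lt_one {p : ℂ[X]} (hp : p ≠ 0) {N : ℕ}
    (hN : p.natDegree ≤ N) :
    ((conjReflect N p).roots.filter (fun z => ‖z‖ < 1)).card =
      (N - p.natDegree) + (p.roots.filter (fun z => 1 < ‖z‖)).card := by
  have hmap : p.map (starRingEnd ℂ) ≠ 0 :=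
    (Polynomial.map_ne_zero_iff (starRingEnd ℂ).injective).mpr hp
  rw [conjReflect, roots_reflect hmap IsAlgClosed.card_roots_eq_natDegree (by rwa [natDegree_map]),
    (IsAlgClosed.splits p).roots_map, natDegree_map, Multiset.filter_add, Multiset.card_add,
    Multiset.filter_eq_self.mpr (fun z hz => by simp [Multiset.eq_of_mem_replicate hz]),
    Multiset.card_replicate, Multiset.filter_map, Multiset.card_map, Multiset.filter_filter,
    Multiset.filter_map, Multiset.card_map]
  congr 2
  refine Multiset.filter_congr fun z _ => ?_
  rcases eq_or_ne z 0 with rfl | hz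
  · simp
  · simp [hz, inv_lt_one₀ (norm_pos_iff.mpr hz)]

theorem card_roots_norm_lt_one_add_card_roots_one_lt_norm {p : ℂ[X]}
    (hp : ∀ z : ℂ, ‖z‖ = 1 → p.eval z ≠ 0) :
    (p.roots.filter (fun z => ‖z‖ < 1)).card + (p.roots.filter (fun z => 1 < ‖z‖)).card =
      p.natDegree := by
  rw [← IsAlgClosed.card_roots_eq_natDegree, ← Multiset.card_add]
  conv_rhs => rw [← Multiset.filter_add_not (fun z : ℂ => ‖z‖ < 1) p.roots]
  congr 2
  refine Multiset.filter_congr fun z hz => ?_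
  have : ‖z‖ ≠ 1 := fun h => hp z h (isRoot_of_mem_roots hz)
  constructor
  · exact fun h => not_lt.mpr h.le
  · exact fun h => lt_of_le_of_ne (not_lt.mp h) this.symm

theorem eval_add_C_mul_ne_zero {s q : ℂ[X]} (hcop : IsCoprime s q) {c : ℂ} (hc : c.im ≠ 0)
    {z : ℂ} (hreal : q.eval z ≠ 0 → ∃ t : ℝ, s.eval z / q.eval z = t) :
    (s + C c * q).eval z ≠ 0 := by
  intro h
  rw [eval_add, eval_mul, eval_C] at h
  by_cases hqz : q.eval z = 0
  · obtain ⟨a, b, hab⟩ := hcop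
    have hsz : s.eval z = 0 := by simpa [hqz] using h
    simpa [hsz, hqz] using congrArg (eval z) hab
  · obtain ⟨t, ht⟩ := hreal hqz
    have hcq : (t + c) * q.eval z = 0 := by
      rw [← ht, add_mul, div_mul_cancel₀ _ hqz, h]
    exact hc (by simpa using congrArg Complex.im ((mul_eq_zero.mp hcq).resolve_right hqz))

theorem add_C_mul_mul_conjReflect {s q : ℂ[X]} {c : ℂ} (hc : conj c = -c) {N : ℕ}
    (hq : q.natDegree ≤ N) (hN : (s - C c * q).natDegree ≤ N)
    (hreal : ∀ z : ℂ, ‖z‖ = 1 → q.eval z ≠ 0 → ∃ t : ℝ, s.eval z / q.eval z = t) :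
    (s + C c * q) * conjReflect N q = q * conjReflect N (s - C c * q) := by
  refine eq_of_forall_norm_eq_one_eval_eq fun z hz => ?_
  have hz0 : conj z ^ N ≠ 0 :=
    pow_ne_zero _ ((_root_.map_ne_zero _).mpr (by rintro rfl; simp at hz))
  refine mul_right_cancel₀ hz0 ?_
  rw [eval_mul, eval_mul, mul_assoc, mul_assoc, eval_conjReflect_mul_conj_pow hq hz,
    eval_conjReflect_mul_conj_pow hN hz]
  simp only [eval_add, eval_sub, eval_mul, eval_C, map_sub, map_mul, hc]
  linear_combination Complex.mul_conj_eq_conj_mul_of_div_eq_ofReal (hreal z hz)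

theorem sub_C_mul_mul_conjReflect {s q : ℂ[X]} {c : ℂ} (hc : conj c = -c) {N : ℕ}
    (hq : q.natDegree ≤ N) (hN : (s + C c * q).natDegree ≤ N)
    (hreal : ∀ z : ℂ, ‖z‖ = 1 → q.eval z ≠ 0 → ∃ t : ℝ, s.eval z / q.eval z = t) :
    (s - C c * q) * conjReflect N q = q * conjReflect N (s + C c * q) := by
  have := add_C_mul_mul_conjReflect (c := -c) (by simp [hc]) hq
    (by simpa [sub_eq_add_neg] using hN) hreal
  simpa [sub_eq_add_neg] using this

theorem natDegree_le_of_mul_conjReflect_eq {p q r : ℂ[X]} {N : ℕ} (hp : p ≠ 0)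
    (hq0 : q.eval 0 ≠ 0) (hq : q.natDegree ≤ N) (hr : r.natDegree ≤ N)
    (h : p * conjReflect N q = q * conjReflect N r) : p.natDegree ≤ q.natDegree := by
  have hq' : conjReflect N q ≠ 0 := conjReflect_ne_zero (by rintro rfl; simp at hq0) N
  have := (congrArg natDegree h).le.trans natDegree_mul_le
  rw [natDegree_mul hp hq', natDegree_conjReflect hq hq0] at this
  linarith [natDegree_conjReflect_le hr]

theorem card_roots_norm_lt_one_of_mul_conjReflect_eq {p q r : ℂ[X]} {N : ℕ} (hp : p ≠ 0)
    (hq : q ≠ 0) (hr : r ≠ 0) (hqroots : ∀ z : ℂ, q.IsRoot z → ‖z‖ = 1)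
    (hqN : q.natDegree ≤ N) (hrN : r.natDegree ≤ N) (hrq : r.natDegree ≤ q.natDegree)
    (h : p * conjReflect N q = q * conjReflect N r) :
    (p.roots.filter (fun z => ‖z‖ < 1)).card =
      (q.natDegree - r.natDegree) + (r.roots.filter (fun z => 1 < ‖z‖)).card := by
  have hroots : p.roots + (conjReflect N q).roots = q.roots + (conjReflect N r).roots := by
    rw [← roots_mul (mul_ne_zero hp (conjReflect_ne_zero hq N)),
      ← roots_mul (mul_ne_zero hq (conjReflect_ne_zero hr N)), h]
  have hcount := congrArg (fun m => (m.filter (fun z : ℂ => ‖z‖ < 1)).card) hroots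
  have hq_inside : q.roots.filter (fun z => ‖z‖ < 1) = 0 :=
    Multiset.filter_eq_nil.mpr fun z hz => by simp [hqroots z (isRoot_of_mem_roots hz)]
  have hq_outside : q.roots.filter (fun z => 1 < ‖z‖) = 0 :=
    Multiset.filter_eq_nil.mpr fun z hz => by simp [hqroots z (isRoot_of_mem_roots hz)]
  simp only [Multiset.filter_add, Multiset.card_add, hq_inside,
    card_roots_conjReflect_norm_lt_one hq hqN, card_roots_conjReflect_norm_lt_one hr hrN,
    hq_outside, Multiset.card_zero] at hcount
  omega

end Polynomial

/-- Root-count identities for `s ± iq` when `ω = s/q` is real on the unit circle: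
with `k_{±,1}` (resp. `k_{±,2}`) the number of roots of `s ± iq` strictly inside
(resp. outside) the unit circle and `l_± = deg q − deg(s ± iq)`, one has
`k_{+,1} = l_− + k_{−,2}` and `k_{−,1} = l_+ + k_{+,2}`; consequently
`k_{+,1} = k_{−,1} ↔ k_{+,1} = l_+ + k_{+,2}`, and `k_{+,1} = k_{−,1}` forces
`deg q` to be even. -/
theorem root_count_identities (s q : Polynomial ℂ)
    (hcop : IsCoprime s q) (hq : q ≠ 0)
    (hqroots : ∀ z : ℂ, q.IsRoot z → ‖z‖ = 1)
    (hreal : ∀ z : ℂ, ‖z‖ = 1 → q.eval z ≠ 0 →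
      ∃ t : ℝ, s.eval z / q.eval z = (t : ℂ)) :
    (((s + Polynomial.C Complex.I * q).roots.filter (fun z => ‖z‖ < 1)).card =
        (q.natDegree - (s - Polynomial.C Complex.I * q).natDegree) +
        ((s - Polynomial.C Complex.I * q).roots.filter (fun z => 1 < ‖z‖)).card) ∧
    (((s - Polynomial.C Complex.I * q).roots.filter (fun z => ‖z‖ < 1)).card =
        (q.natDegree - (s + Polynomial.C Complex.I * q).natDegree) +
        ((s + Polynomial.C Complex.I * q).roots.filter (fun z => 1 < ‖z‖)).card) ∧
    ((((s + Polynomial.C Complex.I * q).roots.filter (fun z => ‖z‖ < 1)).card =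
        ((s - Polynomial.C Complex.I * q).roots.filter (fun z => ‖z‖ < 1)).card ↔
      ((s + Polynomial.C Complex.I * q).roots.filter (fun z => ‖z‖ < 1)).card =
        (q.natDegree - (s + Polynomial.C Complex.I * q).natDegree) +
        ((s + Polynomial.C Complex.I * q).roots.filter (fun z => 1 < ‖z‖)).card)) ∧
    ((((s + Polynomial.C Complex.I * q).roots.filter (fun z => ‖z‖ < 1)).card =
        ((s - Polynomial.C Complex.I * q).roots.filter (fun z => ‖z‖ < 1)).card) →
      Even q.natDegree) := by
  set P := s + C Complex.I * q
  set M := s - C Complex.I * q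
  have hM : M = s + C (-Complex.I) * q := by simp [M, sub_eq_add_neg]
  have hP_circle : ∀ z : ℂ, ‖z‖ = 1 → P.eval z ≠ 0 := fun z hz =>
    eval_add_C_mul_ne_zero hcop (by simp) (hreal z hz)
  have hM_circle : ∀ z : ℂ, ‖z‖ = 1 → M.eval z ≠ 0 := fun z hz =>
    hM ▸ eval_add_C_mul_ne_zero hcop (by simp) (hreal z hz)
  have hP0 : P ≠ 0 := fun h => hP_circle 1 (by simp) (by simp [h])
  have hM0 : M ≠ 0 := fun h => hM_circle 1 (by simp) (by simp [h])
  set N := P.natDegree + M.natDegree + q.natDegree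
  have hPM : P * conjReflect N q = q * conjReflect N M :=
    add_C_mul_mul_conjReflect Complex.conj_I (by omega) (show M.natDegree ≤ N by omega) hreal
  have hMP : M * conjReflect N q = q * conjReflect N P :=
    sub_C_mul_mul_conjReflect Complex.conj_I (by omega) (show P.natDegree ≤ N by omega) hreal
  have hq0 : q.eval 0 ≠ 0 := fun h => by simpa using hqroots 0 h
  have hPq :=
    natDegree_le_of_mul_conjReflect_eq hP0 hq0 (by omega) (show M.natDegree ≤ N by omega) hPM
  have hMq :=
    natDegree_le_of_mul_conjReflect_eq hM0 hq0 (by omega) (show P.natDegree ≤ N by omega) hMP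
  have hPcount :=
    card_roots_norm_lt_one_of_mul_conjReflect_eq hP0 hq hM0 hqroots (by omega) (by omega) hMq hPM
  have hMcount :=
    card_roots_norm_lt_one_of_mul_conjReflect_eq hM0 hq hP0 hqroots (by omega) (by omega) hPq hMP
  have hPtotal := card_roots_norm_lt_one_add_card_roots_one_lt_norm hP_circle
  have hMtotal := card_roots_norm_lt_one_add_card_roots_one_lt_norm hM_circle
  exact ⟨hPcount, hMcount, by omega,
    fun h => ⟨(P.roots.filter (fun z => ‖z‖ < 1)).card, by omega⟩⟩
end
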